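/- The phase S(x₀,x₁,x₂) := S₀(cosh(a₁−a₂)v₀, cosh(a₂−a₀)v₁, cosh(a₀−a₁)v₂) − Σ_cyc sinh(2(a₀−a₁))ℓ₂ is invariant under the diagonal action of symmetries: S(s_x(x₀), s_x(x₁), s_x(x₂)) = S(x₀,x₁,x₂) for every x ∈ M. -/
import Mathlib


/-- The Weyl product phase on `(V,Ω)`: `S₀(u,v,w) = Ω(u,v) + Ω(v,w) + Ω(w,u)`. -/
noncomputable def S0 {V : Type*} [AddCommGroup V] [Module ℝ V]
    (Ω : V →ₗ[ℝ] V →ₗ[ℝ] ℝ) (u v w : V) : ℝ :=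
  Ω u v + Ω v w + Ω w u

/-- The three-point phase function `S` on `M³`, `M = ℝ × V × ℝ`. -/
noncomputable def phase {V : Type*} [AddCommGroup V] [Module ℝ V]
    (Ω : V →ₗ[ℝ] V →ₗ[ℝ] ℝ) (x₀ x₁ x₂ : ℝ × V × ℝ) : ℝ :=
  S0 Ω (Real.cosh (x₁.1 - x₂.1) • x₀.2.1)
       (Real.cosh (x₂.1 - x₀.1) • x₁.2.1)
       (Real.cosh (x₀.1 - x₁.1) • x₂.2.1)
    - (Real.sinh (2 * (x₀.1 - x₁.1)) * x₂.2.2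
       + Real.sinh (2 * (x₁.1 - x₂.1)) * x₀.2.2
       + Real.sinh (2 * (x₂.1 - x₀.1)) * x₁.2.2)

/-- The geodesic symmetry on `M = ℝ × V × ℝ`. -/
noncomputable def sym {V : Type*} [AddCommGroup V] [Module ℝ V]
    (Ω : V →ₗ[ℝ] V →ₗ[ℝ] ℝ) (x y : ℝ × V × ℝ) : ℝ × V × ℝ :=
  (2 * x.1 - y.1,
   (2 * Real.cosh (x.1 - y.1)) • x.2.1 - y.2.1,
   2 * Real.cosh (2 * (x.1 - y.1)) * x.2.2
     + Ω x.2.1 y.2.1 * Real.sinh (x.1 - y.1) - y.2.2)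


set_option maxHeartbeats 1600000 in
/-- the phase `S` is invariant under the diagonal action of the symmetries. -/
theorem phase_symmetry_invariant {V : Type*} [AddCommGroup V] [Module ℝ V]
    (Ω : V →ₗ[ℝ] V →ₗ[ℝ] ℝ) (hΩ : ∀ v w : V, Ω v w = - Ω w v)
    (x x₀ x₁ x₂ : ℝ × V × ℝ) :
    phase Ω (sym Ω x x₀) (sym Ω x x₁) (sym Ω x x₂) = phase Ω x₀ x₁ x₂ := by
  obtain ⟨a, p, l⟩ := x
  obtain ⟨a₀, v₀, l₀⟩ := x₀
  obtain ⟨a₁, v₁, l₁⟩ := x₁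
  obtain ⟨a₂, v₂, l₂⟩ := x₂
  have h00 : Ω p p = 0 := by have := hΩ p p; linarith
  simp only [phase, S0, sym, map_sub, map_smul, LinearMap.sub_apply, LinearMap.smul_apply,
    smul_eq_mul]
  rw [hΩ v₀ p, hΩ v₁ p, hΩ v₂ p, h00]
  simp only [Real.cosh_eq, Real.sinh_eq, Real.exp_sub, Real.exp_neg, two_mul, Real.exp_add]
  field_simp
  ring
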